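/- arXiv:1807.07067 — 2 statements merged into one kernel-verified Lean document; each statement's English description precedes it below -/
import Mathlib

section
/- Let N = (G, c) be a flow network, A ⊆ Ein, and B1, B2 ⊆ Eout with B1 ∩ B2 = ∅. Consider all pairs of functions f, f′ : E → ℝ≥0 such that f + f′ is a feasible flow, f′(A) = f′(B2) = maxFromTo_N(A, B2), and (f + f′)(e) = 0 for every e ∈ (Ein \ A) ∪ (Eout \ (B1 ∪ B2)). Then the supremum of f(B1) over all such pairs equals the supremum of f(A) over all such pairs; that is, definitions (5) and (6) of maxFromToAft_N(A, B1 | A, B2) agree. -/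
/-!
If `(f, f')` is admissible, then `f + f'` is a feasible flow out of `A` whose part in `B2` is
at most `maxFromTo A B2 = f'(B2)`; hence `f(B2) = 0` and, by conservation,
`f(A) = (f + f')(B1) ≥ f(B1)`. Conversely, moving `f'` on `B1` over to `f` realises every
value `f(A)` as a value `f(B1)`, so the two suprema coincide.

The bound on the `B2`-part is flow decomposition: repeatedly cancelling a path of positive
flow from an input to an unwanted output removes all flow on outputs outside `B2` while
keeping it on `B2`.
-/

open Finset

/-- A flow network: a finite vertex set `V`, a finite edge set `E` partitioned into
input edges `Ein`, output edges `Eout` and internal edges `Eint`; each internal edge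
has two distinct endpoints `tail e` and `head e` (with at most one internal edge per
`(tail, head)` pair), each input edge has a head only, each output edge a tail only
(values of `tail`/`head` outside their intended domains are irrelevant junk); and a
nonnegative upper-bound capacity `cap`. -/
structure FlowNetwork (V E : Type) [Fintype V] [Fintype E]
    [DecidableEq V] [DecidableEq E] where
  Ein : Finset E
  Eout : Finset E
  Eint : Finset E
  cover : Ein ∪ Eout ∪ Eint = Finset.univ
  disj_in_out : Disjoint Ein Eout
  disj_in_int : Disjoint Ein Eint
  disj_out_int : Disjoint Eout Eint
  tail : E → V
  head : E → V
  no_self_loop : ∀ e ∈ Eint, tail e ≠ head e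
  no_multi : ∀ e ∈ Eint, ∀ e' ∈ Eint, tail e = tail e' → head e = head e' → e = e'
  cap : E → ℝ
  cap_nonneg : ∀ e, 0 ≤ cap e

namespace FlowNetwork

variable {V E : Type} [Fintype V] [Fintype E] [DecidableEq V] [DecidableEq E]

/-- A flow `f : E → ℝ≥0` is feasible if it conserves flow at every vertex and
respects the capacity of every edge. -/
def Feasible (N : FlowNetwork V E) (f : E → ℝ) : Prop :=
  (∀ e, 0 ≤ f e) ∧ (∀ e, f e ≤ N.cap e) ∧
  ∀ v : V,
    ∑ e ∈ (N.Ein ∪ N.Eint).filter (fun e => N.head e = v), f e =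
    ∑ e ∈ (N.Eout ∪ N.Eint).filter (fun e => N.tail e = v), f e

/-- `maxFromTo N A B`: the supremum of `f(A)` over all feasible flows `f` that
vanish on `(Ein \ A) ∪ (Eout \ B)`. -/
noncomputable def maxFromTo (N : FlowNetwork V E) (A B : Finset E) : ℝ :=
  sSup {x : ℝ | ∃ f : E → ℝ, N.Feasible f ∧
    (∀ e ∈ (N.Ein \ A) ∪ (N.Eout \ B), f e = 0) ∧ x = ∑ e ∈ A, f e}

lemma _root_.exists_pos_smul_sub_nonneg_support_ssubset {ι : Type*} [Fintype ι] {g δ : ι → ℝ}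
    (hg : 0 ≤ g) (hδ : 0 ≤ δ) (hsupp : Function.support δ ⊆ Function.support g)
    (hne : δ ≠ 0) :
    ∃ ε : ℝ, 0 < ε ∧ 0 ≤ g - ε • δ ∧ Function.support (g - ε • δ) ⊂ Function.support g := by
  classical
  have hpos : (univ.filter fun e => 0 < δ e).Nonempty := by
    obtain ⟨e, he⟩ := Function.ne_iff.mp hne
    exact ⟨e, mem_filter.mpr ⟨mem_univ e, (hδ e).lt_of_ne' he⟩⟩
  obtain ⟨e₀, he₀, hmin⟩ := exists_min_image _ (fun e => g e / δ e) hpos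
  have hδe₀ : 0 < δ e₀ := (mem_filter.mp he₀).2
  have hge₀ : 0 < g e₀ := (hg e₀).lt_of_ne' (hsupp hδe₀.ne')
  refine ⟨g e₀ / δ e₀, div_pos hge₀ hδe₀, fun e => ?_, ?_⟩
  · rcases (hδ e).eq_or_lt with hδe | hδe
    · simpa [← hδe] using hg e
    · have := hmin e (mem_filter.mpr ⟨mem_univ e, hδe⟩)
      simpa [sub_nonneg, ← le_div_iff₀ hδe] using this
  · have hsub : Function.support (g - (g e₀ / δ e₀) • δ) ⊆ Function.support g := by
      intro e he hge
      have hδe : δ e = 0 := Function.notMem_support.mp fun h => hsupp h hge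
      exact he (by simp [hge, hδe])
    refine (Set.ssubset_iff_of_subset hsub).mpr ⟨e₀, hge₀.ne', ?_⟩
    simp [div_mul_cancel₀ _ hδe₀.ne']

def netInflow (N : FlowNetwork V E) : (E → ℝ) →ₗ[ℝ] (V → ℝ) where
  toFun g v := ∑ e ∈ (N.Ein ∪ N.Eint).filter (fun e => N.head e = v), g e -
    ∑ e ∈ (N.Eout ∪ N.Eint).filter (fun e => N.tail e = v), g e
  map_add' g g' := by
    ext v
    simp only [Pi.add_apply, sum_add_distrib]
    ring
  map_smul' c g := by
    ext v
    simp only [Pi.smul_apply, smul_eq_mul, ← mul_sum, RingHom.id_apply]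
    ring

variable {N : FlowNetwork V E}

lemma Feasible.netInflow_eq_zero {g : E → ℝ} (hg : N.Feasible g) : N.netInflow g = 0 :=
  funext fun v => sub_eq_zero.mpr (hg.2.2 v)

lemma netInflow_single_of_mem_Eint {e : E} (he : e ∈ N.Eint) :
    N.netInflow (Pi.single e 1) = Pi.single (N.head e) 1 - Pi.single (N.tail e) 1 := by
  ext v
  simp [netInflow, he, Pi.single_apply, eq_comm]

lemma netInflow_single_of_mem_Ein {e : E} (he : e ∈ N.Ein) :
    N.netInflow (Pi.single e 1) = Pi.single (N.head e) 1 := by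
  have hout : e ∉ N.Eout := disjoint_left.mp N.disj_in_out he
  have hint : e ∉ N.Eint := disjoint_left.mp N.disj_in_int he
  ext v
  simp [netInflow, he, hout, hint, Pi.single_apply, eq_comm]

lemma netInflow_single_of_mem_Eout {e : E} (he : e ∈ N.Eout) :
    N.netInflow (Pi.single e 1) = -Pi.single (N.tail e) 1 := by
  have hin : e ∉ N.Ein := disjoint_right.mp N.disj_in_out he
  have hint : e ∉ N.Eint := disjoint_left.mp N.disj_out_int he
  ext v
  simp [netInflow, he, hin, hint, Pi.single_apply, eq_comm]

lemma sum_inflow_eq_sum_outflow {g : E → ℝ} (hg : N.netInflow g = 0) (R : Finset V) :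
    ∑ e ∈ N.Ein with N.head e ∈ R, g e + ∑ e ∈ N.Eint with N.head e ∈ R, g e =
      ∑ e ∈ N.Eout with N.tail e ∈ R, g e + ∑ e ∈ N.Eint with N.tail e ∈ R, g e := by
  have hR : ∑ v ∈ R, N.netInflow g v = 0 := by simp [hg]
  simp only [netInflow, LinearMap.coe_mk, AddHom.coe_mk, sum_sub_distrib,
    sum_fiberwise_eq_sum_filter] at hR
  rw [filter_union, filter_union, sum_union (disjoint_filter_filter N.disj_in_int),
    sum_union (disjoint_filter_filter N.disj_out_int)] at hR
  linarith

lemma sum_Ein_eq_sum_Eout {g : E → ℝ} (hg : N.netInflow g = 0) :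
    ∑ e ∈ N.Ein, g e = ∑ e ∈ N.Eout, g e := by
  simpa using sum_inflow_eq_sum_outflow hg univ

def FlowAdj (N : FlowNetwork V E) (g : E → ℝ) (a b : V) : Prop :=
  ∃ e ∈ N.Eint, 0 < g e ∧ N.tail e = a ∧ N.head e = b

lemma exists_pathFlow {g : E → ℝ} {u w : V} (h : Relation.ReflTransGen (N.FlowAdj g) u w) :
    ∃ δ : E → ℝ, 0 ≤ δ ∧ (∀ e, δ e ≠ 0 → e ∈ N.Eint ∧ 0 < g e) ∧
      N.netInflow δ = Pi.single w 1 - Pi.single u 1 := by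
  induction h using Relation.ReflTransGen.head_induction_on with
  | refl => exact ⟨0, le_rfl, fun e he => absurd rfl he, by simp⟩
  | head hstep _ ih =>
    obtain ⟨e, he, hge, rfl, rfl⟩ := hstep
    obtain ⟨δ, hδ0, hδsupp, hδ⟩ := ih
    refine ⟨δ + Pi.single e 1, add_nonneg hδ0 (Pi.single_nonneg.mpr zero_le_one), ?_, ?_⟩
    · intro x hx
      by_cases hxe : x = e
      · exact hxe ▸ ⟨he, hge⟩
      · exact hδsupp x (by simpa [Pi.single_apply, hxe] using hx)
    · rw [map_add, hδ, netInflow_single_of_mem_Eint he]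
      abel

lemma exists_Ein_reaching {g : E → ℝ} (hg0 : 0 ≤ g) (hg : N.netInflow g = 0) {o : E}
    (ho : o ∈ N.Eout) (hgo : 0 < g o) :
    ∃ i ∈ N.Ein, 0 < g i ∧ Relation.ReflTransGen (N.FlowAdj g) (N.head i) (N.tail o) := by
  classical
  set R : Finset V := univ.filter fun v => Relation.ReflTransGen (N.FlowAdj g) v (N.tail o)
  have hmemR : ∀ v, v ∈ R ↔ Relation.ReflTransGen (N.FlowAdj g) v (N.tail o) := by simp [R]
  -- an internal edge with positive flow into `R` also starts in `R`
  have hint : ∑ e ∈ N.Eint with N.head e ∈ R, g e ≤ ∑ e ∈ N.Eint with N.tail e ∈ R, g e := by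
    rw [← sum_filter_of_ne (p := fun e => 0 < g e) fun e _ he => (hg0 e).lt_of_ne' he]
    refine sum_le_sum_of_subset_of_nonneg (fun e he => ?_) fun e _ _ => hg0 e
    simp only [mem_filter] at he ⊢
    obtain ⟨⟨heint, hheadR⟩, hge⟩ := he
    exact ⟨heint, (hmemR _).mpr (.head ⟨e, heint, hge, rfl, rfl⟩ ((hmemR _).mp hheadR))⟩
  have hout : g o ≤ ∑ e ∈ N.Eout with N.tail e ∈ R, g e :=
    single_le_sum (fun e _ => hg0 e) (mem_filter.mpr ⟨ho, (hmemR _).mpr .refl⟩)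
  have hin : 0 < ∑ e ∈ N.Ein with N.head e ∈ R, g e := by
    linarith [sum_inflow_eq_sum_outflow hg R]
  obtain ⟨i, hi, hgi⟩ := exists_lt_of_sum_lt (f := fun _ => (0 : ℝ)) (by simpa using hin)
  obtain ⟨hiEin, hiR⟩ := mem_filter.mp hi
  exact ⟨i, hiEin, hgi, (hmemR _).mp hiR⟩

/-- Cancelling part of an input-to-`o` path of `g` strictly shrinks the support of `g`. -/
lemma exists_reduce_at_Eout {g : E → ℝ} (hg0 : 0 ≤ g) (hg : N.netInflow g = 0) {o : E}
    (ho : o ∈ N.Eout) (hgo : 0 < g o) :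
    ∃ g' : E → ℝ, 0 ≤ g' ∧ g' ≤ g ∧ N.netInflow g' = 0 ∧
      (∀ e ∈ N.Eout, e ≠ o → g' e = g e) ∧ Function.support g' ⊂ Function.support g := by
  obtain ⟨i, hi, hgi, hreach⟩ := exists_Ein_reaching hg0 hg ho hgo
  obtain ⟨δ, hδ0, hδsupp, hδ⟩ := exists_pathFlow hreach
  have hio : i ≠ o := fun h => disjoint_left.mp N.disj_in_out hi (h ▸ ho)
  set δ' : E → ℝ := δ + Pi.single i 1 + Pi.single o 1
  have hδ'0 : 0 ≤ δ' :=
    add_nonneg (add_nonneg hδ0 (Pi.single_nonneg.mpr zero_le_one))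
      (Pi.single_nonneg.mpr zero_le_one)
  have hδ' : N.netInflow δ' = 0 := by
    rw [map_add, map_add, hδ, netInflow_single_of_mem_Ein hi, netInflow_single_of_mem_Eout ho]
    abel
  have hδ'out : ∀ e ∈ N.Eout, e ≠ o → δ' e = 0 := by
    intro e he heo
    have hδe : δ e = 0 := by_contra fun h => disjoint_left.mp N.disj_out_int he (hδsupp e h).1
    have hei : e ≠ i := fun h => disjoint_left.mp N.disj_in_out (h ▸ hi) he
    simp [δ', hδe, hei, heo]
  have hsupp : Function.support δ' ⊆ Function.support g := by
    intro e he
    by_cases hei : e = i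
    · exact hei ▸ hgi.ne'
    by_cases heo : e = o
    · exact heo ▸ hgo.ne'
    exact (hδsupp e (by simpa [δ', hei, heo] using he)).2.ne'
  have hδ'o : 1 ≤ δ' o := by simpa [δ', hio.symm] using hδ0 o
  have hδ'ne : δ' ≠ 0 := fun h => by norm_num [h] at hδ'o
  obtain ⟨ε, hε, hg'0, hg'supp⟩ :=
    exists_pos_smul_sub_nonneg_support_ssubset hg0 hδ'0 hsupp hδ'ne
  refine ⟨g - ε • δ', hg'0, sub_le_self _ (smul_nonneg hε.le hδ'0), ?_, ?_, hg'supp⟩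
  · rw [map_sub, map_smul, hg, hδ', smul_zero, sub_zero]
  · intro e he heo
    simp [hδ'out e he heo]

lemma exists_subflow_restrict_Eout {B : Finset E} (hB : B ⊆ N.Eout) {g : E → ℝ} (hg0 : 0 ≤ g)
    (hg : N.netInflow g = 0) :
    ∃ h : E → ℝ, 0 ≤ h ∧ h ≤ g ∧ N.netInflow h = 0 ∧ (∀ e ∈ B, h e = g e) ∧
      ∀ e ∈ N.Eout \ B, h e = 0 := by
  induction hn : (Function.support g).ncard using Nat.strong_induction_on generalizing g with
  | _ n ih =>
  by_cases hrest : ∀ e ∈ N.Eout \ B, g e = 0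
  · exact ⟨g, hg0, le_rfl, hg, fun _ _ => rfl, hrest⟩
  obtain ⟨o, ho, hgo⟩ := not_forall₂.mp hrest
  obtain ⟨hoEout, hoB⟩ := mem_sdiff.mp ho
  obtain ⟨g', hg'0, hg'le, hg', hg'out, hg'supp⟩ :=
    exists_reduce_at_Eout hg0 hg hoEout ((hg0 o).lt_of_ne' hgo)
  obtain ⟨h, hh0, hhle, hh, hhB, hhout⟩ :=
    ih _ (hn ▸ Set.ncard_lt_ncard hg'supp) hg'0 hg' rfl
  refine ⟨h, hh0, hhle.trans hg'le, hh, fun e he => ?_, hhout⟩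
  rw [hhB e he, hg'out e (hB he) (ne_of_mem_of_not_mem he hoB)]

lemma bddAbove_maxFromTo_set (N : FlowNetwork V E) (A B : Finset E) :
    BddAbove {x : ℝ | ∃ f : E → ℝ, N.Feasible f ∧
      (∀ e ∈ (N.Ein \ A) ∪ (N.Eout \ B), f e = 0) ∧ x = ∑ e ∈ A, f e} := by
  refine ⟨∑ e, N.cap e, ?_⟩
  rintro x ⟨f, ⟨_, hfcap, _⟩, _, rfl⟩
  calc ∑ e ∈ A, f e ≤ ∑ e ∈ A, N.cap e := sum_le_sum fun e _ => hfcap e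
    _ ≤ ∑ e, N.cap e := sum_le_sum_of_subset_of_nonneg (subset_univ A) fun e _ _ => N.cap_nonneg e

lemma sum_le_maxFromTo {g : E → ℝ} (hg : N.Feasible g) {A B : Finset E} (hA : A ⊆ N.Ein)
    (hB : B ⊆ N.Eout) (hgA : ∀ e ∈ N.Ein \ A, g e = 0) :
    ∑ e ∈ B, g e ≤ N.maxFromTo A B := by
  obtain ⟨h, hh0, hhle, hh, hhB, hhout⟩ := exists_subflow_restrict_Eout hB hg.1 hg.netInflow_eq_zero
  have hhA : ∀ e ∈ N.Ein \ A, h e = 0 := fun e he => le_antisymm (hgA e he ▸ hhle e) (hh0 e)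
  have hfeas : N.Feasible h := ⟨hh0, fun e => (hhle e).trans (hg.2.1 e), fun v => ?_⟩
  · calc ∑ e ∈ B, g e = ∑ e ∈ B, h e := (sum_congr rfl hhB).symm
      _ = ∑ e ∈ N.Eout, h e := sum_subset hB fun e he heB => hhout e (mem_sdiff.mpr ⟨he, heB⟩)
      _ = ∑ e ∈ N.Ein, h e := (sum_Ein_eq_sum_Eout hh).symm
      _ = ∑ e ∈ A, h e := (sum_subset hA fun e he heA => hhA e (mem_sdiff.mpr ⟨he, heA⟩)).symm
      _ ≤ N.maxFromTo A B := le_csSup (bddAbove_maxFromTo_set N A B)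
          ⟨h, hfeas, fun e he => (mem_union.mp he).elim (hhA e) (hhout e), rfl⟩
  · exact sub_eq_zero.mp (congr_fun hh v)

/-- Since `f'` alone already carries `maxFromTo A B2` into `B2`, `f` sends nothing there. -/
lemma sum_eq_sum_add_of_saturates {A B1 B2 : Finset E} (hA : A ⊆ N.Ein) (hB1 : B1 ⊆ N.Eout)
    (hB2 : B2 ⊆ N.Eout) (hdisj : Disjoint B1 B2) {f f' : E → ℝ} (hf0 : ∀ e, 0 ≤ f e)
    (hfeas : N.Feasible (f + f')) (hA' : ∑ e ∈ A, f' e = N.maxFromTo A B2)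
    (hB2' : ∑ e ∈ B2, f' e = N.maxFromTo A B2)
    (hvan : ∀ e ∈ (N.Ein \ A) ∪ (N.Eout \ (B1 ∪ B2)), f e + f' e = 0) :
    ∑ e ∈ A, f e = ∑ e ∈ B1, (f e + f' e) := by
  have hfB2 : ∑ e ∈ B2, f e = 0 := by
    have hle := sum_le_maxFromTo hfeas hA hB2 fun e he => hvan e (mem_union_left _ he)
    simp only [Pi.add_apply, sum_add_distrib, hB2'] at hle
    exact le_antisymm (by linarith) (sum_nonneg fun e _ => hf0 e)
  have hIn : ∑ e ∈ A, (f e + f' e) = ∑ e ∈ N.Ein, (f + f') e :=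
    sum_subset hA fun e he heA => hvan e (mem_union_left _ (mem_sdiff.mpr ⟨he, heA⟩))
  have hOut : ∑ e ∈ N.Eout, (f + f') e = ∑ e ∈ B1 ∪ B2, (f e + f' e) :=
    (sum_subset (union_subset hB1 hB2) fun e he heB =>
      hvan e (mem_union_right _ (mem_sdiff.mpr ⟨he, heB⟩))).symm
  have htot := sum_Ein_eq_sum_Eout hfeas.netInflow_eq_zero
  rw [← hIn, hOut, sum_union hdisj] at htot
  simp only [sum_add_distrib, hA', hB2', hfB2] at htot ⊢
  linarith

/-- the two suprema defining `maxFromToAft N (A,B1 | A,B2)` agree: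
the sup of `f(B1)` equals the sup of `f(A)` over all pairs `(f, f')` of nonnegative
functions with `f + f'` feasible, `f'(A) = f'(B2) = maxFromTo N A B2`, and `f + f'`
vanishing on `(Ein \ A) ∪ (Eout \ (B1 ∪ B2))`. -/
theorem stmt4 (N : FlowNetwork V E) (A B1 B2 : Finset E)
    (hA : A ⊆ N.Ein) (hB1 : B1 ⊆ N.Eout) (hB2 : B2 ⊆ N.Eout)
    (hdisj : Disjoint B1 B2) :
    sSup {x : ℝ | ∃ f f' : E → ℝ, (∀ e, 0 ≤ f e) ∧ (∀ e, 0 ≤ f' e) ∧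
        N.Feasible (f + f') ∧
        ∑ e ∈ A, f' e = N.maxFromTo A B2 ∧ ∑ e ∈ B2, f' e = N.maxFromTo A B2 ∧
        (∀ e ∈ (N.Ein \ A) ∪ (N.Eout \ (B1 ∪ B2)), f e + f' e = 0) ∧
        x = ∑ e ∈ B1, f e} =
    sSup {x : ℝ | ∃ f f' : E → ℝ, (∀ e, 0 ≤ f e) ∧ (∀ e, 0 ≤ f' e) ∧
        N.Feasible (f + f') ∧
        ∑ e ∈ A, f' e = N.maxFromTo A B2 ∧ ∑ e ∈ B2, f' e = N.maxFromTo A B2 ∧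
        (∀ e ∈ (N.Ein \ A) ∪ (N.Eout \ (B1 ∪ B2)), f e + f' e = 0) ∧
        x = ∑ e ∈ A, f e} := by
  apply csSup_eq_csSup_of_forall_exists_le
  · rintro _ ⟨f, f', hf0, hf'0, hfeas, hA', hB2', hvan, rfl⟩
    refine ⟨_, ⟨f, f', hf0, hf'0, hfeas, hA', hB2', hvan, rfl⟩, ?_⟩
    rw [sum_eq_sum_add_of_saturates hA hB1 hB2 hdisj hf0 hfeas hA' hB2' hvan]
    exact sum_le_sum fun e _ => le_add_of_nonneg_right (hf'0 e)
  · rintro _ ⟨f, f', hf0, hf'0, hfeas, hA', hB2', hvan, rfl⟩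
    -- move the part of `f'` on `B1` over to `f`
    have hAB1 : ∀ e ∈ A, e ∉ B1 := fun e he heB1 => disjoint_left.mp N.disj_in_out (hA he) (hB1 heB1)
    have hB2B1 : ∀ e ∈ B2, e ∉ B1 := fun e he heB1 => disjoint_left.mp hdisj heB1 he
    refine ⟨_, ⟨fun e => if e ∈ B1 then f e + f' e else f e,
      fun e => if e ∈ B1 then 0 else f' e, fun e => ?_, fun e => ?_, ?_, ?_, ?_, fun e he => ?_, rfl⟩,
      ?_⟩
    · dsimp only
      split_ifs
      exacts [add_nonneg (hf0 e) (hf'0 e), hf0 e]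
    · dsimp only
      split_ifs
      exacts [le_rfl, hf'0 e]
    · convert hfeas using 1
      ext e
      simp only [Pi.add_apply]
      split_ifs <;> ring
    · rwa [sum_congr rfl fun e he => if_neg (hAB1 e he)]
    · rwa [sum_congr rfl fun e he => if_neg (hB2B1 e he)]
    · dsimp only
      split_ifs
      exacts [(add_zero _).trans (hvan e he), hvan e he]
    · rw [sum_congr rfl fun e he => if_pos he,
        sum_eq_sum_add_of_saturates hA hB1 hB2 hdisj hf0 hfeas hA' hB2' hvan]

end FlowNetwork
end

section
/- Let N = (G, c) be a flow network and let g : Ein ∪ Eout → ℝ≥0 be an IO assignment such that for all A ⊆ Ein and B ⊆ Eout it holds that −maxFromTo_N(Ein \ A, B) ≤ g(A) − g(B) ≤ maxFromTo_N(A, Eout \ B). Then g extends to a feasible flow, i.e., there exists a feasible flow f : E → ℝ≥0 whose restriction to Ein ∪ Eout equals g. -/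
/-!
Among the feasible flows `f` with `f ≤ g` on the input and output edges (a compact set,
nonempty because `g ≥ 0`) take one maximizing the total flow on those edges. If an input
edge `e₀` is not saturated, let `T` be the set of vertices reachable from `head e₀` in the
residual graph of `f`. Every output edge leaving `T` is saturated, since otherwise a small
amount of flow could be pushed through `e₀`, along a residual path, and out of that output
edge. Internal edges leaving `T` are full and those entering `T` are empty, so flow balance
on `T` gives `f(A) = g(B) + cap(δ⁺T) ≥ g(B) + maxFromTo(A, Eout \ B) ≥ g(A)` for the input
edges `A` into `T` and the output edges `B` out of `T`, contradicting `f(e₀) < g(e₀)`.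
Once every input edge is saturated, `f(Eout) = f(Ein) = g(Ein) ≥ g(Eout)` by the lower
bound at `A = Ein`, `B = Eout`, which forces `f = g` on the output edges as well.
-/

open Finset

open Filter Topology

theorem eventually_add_mul_le {a b c : ℝ} (hab : a ≤ b) (hlt : 0 < c → a < b) :
    ∀ᶠ t in 𝓝[>] (0 : ℝ), a + t * c ≤ b := by
  rcases le_or_gt c 0 with hc | hc
  · filter_upwards [self_mem_nhdsWithin] with t (ht : 0 < t)
    nlinarith
  · filter_upwards [Ioo_mem_nhdsGT (div_pos (sub_pos.2 (hlt hc)) hc)] with t ht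
    have := (lt_div_iff₀ hc).1 ht.2
    linarith

theorem eventually_nonneg_add_mul {a c : ℝ} (ha : 0 ≤ a) (hlt : c < 0 → 0 < a) :
    ∀ᶠ t in 𝓝[>] (0 : ℝ), 0 ≤ a + t * c := by
  filter_upwards [eventually_add_mul_le (b := 0) (c := -c) (neg_nonpos.2 ha)
    fun hc => neg_neg_iff_pos.2 (hlt (neg_pos.1 hc))] with t ht
  linarith [mul_neg t c]

namespace FlowNetwork

variable {V E : Type} [Fintype V] [Fintype E] [DecidableEq V] [DecidableEq E]

theorem notMem_Eint_of_mem_union (N : FlowNetwork V E) {e : E} (he : e ∈ N.Ein ∪ N.Eout) :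
    e ∉ N.Eint :=
  (mem_union.1 he).elim (fun h => disjoint_left.1 N.disj_in_int h)
    (fun h => disjoint_left.1 N.disj_out_int h)

def excess (N : FlowNetwork V E) : (E → ℝ) →ₗ[ℝ] V → ℝ where
  toFun f v := ∑ e ∈ (N.Ein ∪ N.Eint).filter (fun e => N.head e = v), f e -
    ∑ e ∈ (N.Eout ∪ N.Eint).filter (fun e => N.tail e = v), f e
  map_add' f f' := by ext v; simp only [Pi.add_apply, sum_add_distrib]; ring
  map_smul' c f := by ext v; simp [mul_sum, mul_sub]

theorem excess_apply (N : FlowNetwork V E) (f : E → ℝ) (v : V) :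
    N.excess f v = ∑ e ∈ (N.Ein ∪ N.Eint).filter (fun e => N.head e = v), f e -
      ∑ e ∈ (N.Eout ∪ N.Eint).filter (fun e => N.tail e = v), f e := rfl

theorem feasible_iff (N : FlowNetwork V E) (f : E → ℝ) :
    N.Feasible f ↔ (∀ e, 0 ≤ f e) ∧ (∀ e, f e ≤ N.cap e) ∧ N.excess f = 0 := by
  simp [Feasible, funext_iff, excess_apply, sub_eq_zero]

theorem excess_single_of_mem_Eint (N : FlowNetwork V E) {e : E} (he : e ∈ N.Eint) (c : ℝ) :
    N.excess (Pi.single e c) = (Pi.single (N.head e) c - Pi.single (N.tail e) c : V → ℝ) := by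
  ext v
  simp [excess_apply, Pi.single_apply, he, eq_comm]

theorem excess_single_of_mem_Ein (N : FlowNetwork V E) {e : E} (he : e ∈ N.Ein) (c : ℝ) :
    N.excess (Pi.single e c) = (Pi.single (N.head e) c : V → ℝ) := by
  ext v
  have hout : e ∉ N.Eout := disjoint_left.1 N.disj_in_out he
  have hint : e ∉ N.Eint := N.notMem_Eint_of_mem_union (mem_union_left _ he)
  simp [excess_apply, Pi.single_apply, he, hout, hint, eq_comm]

theorem excess_single_of_mem_Eout (N : FlowNetwork V E) {e : E} (he : e ∈ N.Eout) (c : ℝ) :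
    N.excess (Pi.single e c) = -(Pi.single (N.tail e) c : V → ℝ) := by
  ext v
  have hin : e ∉ N.Ein := disjoint_right.1 N.disj_in_out he
  have hint : e ∉ N.Eint := N.notMem_Eint_of_mem_union (mem_union_right _ he)
  simp [excess_apply, Pi.single_apply, he, hin, hint, eq_comm]

def inEdgesInto (N : FlowNetwork V E) (T : Finset V) : Finset E :=
  N.Ein.filter (fun e => N.head e ∈ T)

def outEdgesFrom (N : FlowNetwork V E) (T : Finset V) : Finset E :=
  N.Eout.filter (fun e => N.tail e ∈ T)

def entering (N : FlowNetwork V E) (T : Finset V) : Finset E :=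
  N.Eint.filter (fun e => N.head e ∈ T ∧ N.tail e ∉ T)

def leaving (N : FlowNetwork V E) (T : Finset V) : Finset E :=
  N.Eint.filter (fun e => N.tail e ∈ T ∧ N.head e ∉ T)

theorem sum_excess (N : FlowNetwork V E) (f : E → ℝ) (T : Finset V) :
    ∑ v ∈ T, N.excess f v = ∑ e ∈ N.inEdgesInto T, f e + ∑ e ∈ N.entering T, f e -
      ∑ e ∈ N.outEdgesFrom T, f e - ∑ e ∈ N.leaving T, f e := by
  have hEint : ∑ e ∈ N.Eint.filter (fun e => N.head e ∈ T), f e -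
      ∑ e ∈ N.Eint.filter (fun e => N.tail e ∈ T), f e =
      ∑ e ∈ N.entering T, f e - ∑ e ∈ N.leaving T, f e := by
    rw [← sum_filter_add_sum_filter_not (N.Eint.filter _) (fun e => N.tail e ∈ T),
      ← sum_filter_add_sum_filter_not (N.Eint.filter (fun e => N.tail e ∈ T))
        (fun e => N.head e ∈ T)]
    simp only [filter_filter, entering, leaving]
    rw [filter_congr fun e _ => and_comm (a := N.head e ∈ T)]
    ring
  simp only [excess_apply, filter_union, sum_union (disjoint_filter_filter N.disj_in_int),
    sum_union (disjoint_filter_filter N.disj_out_int), sum_sub_distrib, sum_add_distrib,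
    sum_fiberwise_eq_sum_filter]
  rw [inEdgesInto, outEdgesFrom]
  linarith

theorem cut_balance (N : FlowNetwork V E) {f : E → ℝ} (hf : N.excess f = 0) (T : Finset V) :
    ∑ e ∈ N.inEdgesInto T, f e + ∑ e ∈ N.entering T, f e =
      ∑ e ∈ N.outEdgesFrom T, f e + ∑ e ∈ N.leaving T, f e := by
  have := N.sum_excess f T
  simp only [hf, Pi.zero_apply, sum_const_zero] at this
  linarith

theorem sum_Ein_eq_sum_Eout_s8 (N : FlowNetwork V E) {f : E → ℝ} (hf : N.excess f = 0) :
    ∑ e ∈ N.Ein, f e = ∑ e ∈ N.Eout, f e := by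
  simpa [inEdgesInto, outEdgesFrom, entering, leaving] using N.cut_balance hf univ

theorem feasible_zero (N : FlowNetwork V E) : N.Feasible 0 :=
  (N.feasible_iff 0).2 ⟨fun _ => le_rfl, N.cap_nonneg, map_zero _⟩

theorem maxFromTo_le (N : FlowNetwork V E) {A B : Finset E} {M : ℝ}
    (hM : ∀ f, N.Feasible f → (∀ e ∈ (N.Ein \ A) ∪ (N.Eout \ B), f e = 0) →
      ∑ e ∈ A, f e ≤ M) :
    N.maxFromTo A B ≤ M :=
  csSup_le ⟨0, 0, N.feasible_zero, fun _ _ => rfl, by simp⟩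
    fun _ ⟨f, hf, hv, hx⟩ => hx ▸ hM f hf hv

theorem maxFromTo_empty_left (N : FlowNetwork V E) (B : Finset E) : N.maxFromTo ∅ B = 0 := by
  refine le_antisymm (N.maxFromTo_le fun _ _ _ => by simp) (le_csSup ⟨0, ?_⟩ ?_)
  · rintro _ ⟨f, -, -, rfl⟩
    simp
  · exact ⟨0, N.feasible_zero, fun _ _ => rfl, by simp⟩

theorem maxFromTo_le_sum_cap_left (N : FlowNetwork V E) (A B : Finset E) :
    N.maxFromTo A B ≤ ∑ e ∈ A, N.cap e :=
  N.maxFromTo_le fun _ hf _ => sum_le_sum fun e _ => hf.2.1 e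

theorem maxFromTo_le_sum_cap_right (N : FlowNetwork V E) {A B : Finset E} (hA : A ⊆ N.Ein)
    (hB : B ⊆ N.Eout) : N.maxFromTo A B ≤ ∑ e ∈ B, N.cap e := by
  refine N.maxFromTo_le fun f hf hv => ?_
  obtain ⟨h0, hc, hex⟩ := (N.feasible_iff f).1 hf
  calc ∑ e ∈ A, f e ≤ ∑ e ∈ N.Ein, f e :=
        sum_le_sum_of_subset_of_nonneg hA fun e _ _ => h0 e
    _ = ∑ e ∈ N.Eout, f e := N.sum_Ein_eq_sum_Eout_s8 hex
    _ = ∑ e ∈ B, f e := (sum_subset hB fun e he heB =>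
          hv e (mem_union_right _ (mem_sdiff.2 ⟨he, heB⟩))).symm
    _ ≤ ∑ e ∈ B, N.cap e := sum_le_sum fun e _ => hc e

theorem maxFromTo_le_sum_cap_leaving (N : FlowNetwork V E) (T : Finset V) :
    N.maxFromTo (N.inEdgesInto T) (N.Eout \ N.outEdgesFrom T) ≤
      ∑ e ∈ N.leaving T, N.cap e := by
  refine N.maxFromTo_le fun f hf hv => ?_
  obtain ⟨h0, hc, hex⟩ := (N.feasible_iff f).1 hf
  have hout : ∑ e ∈ N.outEdgesFrom T, f e = 0 := sum_eq_zero fun e he =>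
    hv e (mem_union_right _ (by simpa [outEdgesFrom] using he))
  have := N.cut_balance hex T
  have := sum_nonneg fun e (_ : e ∈ N.entering T) => h0 e
  have := sum_le_sum fun e (_ : e ∈ N.leaving T) => hc e
  linarith

def ResidualAdj (N : FlowNetwork V E) (f : E → ℝ) (u v : V) : Prop :=
  ∃ e ∈ N.Eint, (N.tail e = u ∧ N.head e = v ∧ f e < N.cap e) ∨
    (N.head e = u ∧ N.tail e = v ∧ 0 < f e)

def IsAugmentingDir (N : FlowNetwork V E) (f p : E → ℝ) : Prop :=
  ∀ e, (0 < p e → f e < N.cap e) ∧ (p e < 0 → 0 < f e)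

namespace IsAugmentingDir

variable {N : FlowNetwork V E} {f p : E → ℝ}

theorem add_single (hp : N.IsAugmentingDir f p) {e : E} (he : f e < N.cap e) {c : ℝ}
    (hc : 0 ≤ c) : N.IsAugmentingDir f (p + Pi.single e c) := by
  intro x
  rcases eq_or_ne x e with rfl | hx
  · exact ⟨fun _ => he, fun h => (hp x).2 (by simp at h; linarith)⟩
  · simpa [hx] using hp x

theorem sub_single (hp : N.IsAugmentingDir f p) {e : E} (he : 0 < f e) {c : ℝ}
    (hc : 0 ≤ c) : N.IsAugmentingDir f (p - Pi.single e c) := by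
  intro x
  rcases eq_or_ne x e with rfl | hx
  · exact ⟨fun h => (hp x).1 (by simp at h; linarith), fun _ => he⟩
  · simpa [hx] using hp x

theorem eventually_feasible_add_smul (hf : N.Feasible f) (hp : N.IsAugmentingDir f p)
    (hcons : N.excess p = 0) : ∀ᶠ t in 𝓝[>] (0 : ℝ), N.Feasible (f + t • p) := by
  obtain ⟨h0, hc, hex⟩ := (N.feasible_iff f).1 hf
  have hlow := eventually_all.2 fun e => eventually_nonneg_add_mul (h0 e) (hp e).2
  have hup := eventually_all.2 fun e => eventually_add_mul_le (hc e) (hp e).1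
  filter_upwards [hlow, hup] with t hlow hup
  exact (N.feasible_iff _).2 ⟨hlow, hup, by simp [hex, hcons]⟩

end IsAugmentingDir

theorem exists_augmentingDir_of_reflTransGen (N : FlowNetwork V E) {f : E → ℝ} {u v : V}
    (hr : Relation.ReflTransGen (N.ResidualAdj f) u v) :
    ∃ p, N.IsAugmentingDir f p ∧ (∀ e ∈ N.Ein ∪ N.Eout, p e = 0) ∧
      N.excess p = Pi.single v 1 - Pi.single u 1 := by
  induction hr with
  | refl => exact ⟨0, fun e => by simp, fun _ _ => rfl, by simp⟩
  | tail _ hadj ih =>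
    obtain ⟨p, hp, hpIO, hpex⟩ := ih
    obtain ⟨e, he, ⟨rfl, rfl, hlt⟩ | ⟨rfl, rfl, hpos⟩⟩ := hadj
    · refine ⟨p + Pi.single e 1, hp.add_single hlt zero_le_one, fun x hx => ?_, ?_⟩
      · simp [hpIO x hx, ne_of_mem_of_not_mem he (N.notMem_Eint_of_mem_union hx)]
      · rw [map_add, hpex, N.excess_single_of_mem_Eint he]
        abel
    · refine ⟨p - Pi.single e 1, hp.sub_single hpos zero_le_one, fun x hx => ?_, ?_⟩
      · simp [hpIO x hx, ne_of_mem_of_not_mem he (N.notMem_Eint_of_mem_union hx)]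
      · rw [map_sub, hpex, N.excess_single_of_mem_Eint he]
        abel

theorem exists_augmentingCirculation (N : FlowNetwork V E) {f : E → ℝ} {ein eout : E}
    (hein : ein ∈ N.Ein) (heout : eout ∈ N.Eout)
    (hin : f ein < N.cap ein) (hout : f eout < N.cap eout)
    (hr : Relation.ReflTransGen (N.ResidualAdj f) (N.head ein) (N.tail eout)) :
    ∃ q, N.IsAugmentingDir f q ∧ N.excess q = 0 ∧
      ∀ e ∈ N.Ein ∪ N.Eout,
        q e = (if e = ein then 1 else 0) + (if e = eout then 1 else 0) := by
  obtain ⟨p, hp, hpIO, hpex⟩ := N.exists_augmentingDir_of_reflTransGen hr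
  refine ⟨p + Pi.single ein 1 + Pi.single eout 1,
    (hp.add_single hin zero_le_one).add_single hout zero_le_one, ?_,
    fun e he => by simp [hpIO e he, Pi.single_apply]⟩
  rw [map_add, map_add, hpex, N.excess_single_of_mem_Ein hein,
    N.excess_single_of_mem_Eout heout]
  abel

theorem sum_leaving_eq_sum_cap (N : FlowNetwork V E) {f : E → ℝ} (hc : ∀ e, f e ≤ N.cap e)
    {T : Finset V} (hT : ∀ u ∈ T, ∀ v, N.ResidualAdj f u v → v ∈ T) :
    ∑ e ∈ N.leaving T, f e = ∑ e ∈ N.leaving T, N.cap e := by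
  refine sum_congr rfl fun e he => ?_
  obtain ⟨he, hu, hv⟩ := mem_filter.1 he
  by_contra hne
  exact hv (hT _ hu _ ⟨e, he, Or.inl ⟨rfl, rfl, lt_of_le_of_ne (hc e) hne⟩⟩)

theorem sum_entering_eq_zero (N : FlowNetwork V E) {f : E → ℝ} (h0 : ∀ e, 0 ≤ f e)
    {T : Finset V} (hT : ∀ u ∈ T, ∀ v, N.ResidualAdj f u v → v ∈ T) :
    ∑ e ∈ N.entering T, f e = 0 := by
  refine sum_eq_zero fun e he => ?_
  obtain ⟨he, hv, hu⟩ := mem_filter.1 he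
  by_contra hne
  exact hu (hT _ hv _ ⟨e, he, Or.inr ⟨rfl, rfl, lt_of_le_of_ne (h0 e) (Ne.symm hne)⟩⟩)

def flowsLE (N : FlowNetwork V E) (g : E → ℝ) : Set (E → ℝ) :=
  {f | N.Feasible f ∧ ∀ e ∈ N.Ein ∪ N.Eout, f e ≤ g e}

theorem isClosed_setOf_feasible (N : FlowNetwork V E) : IsClosed {f | N.Feasible f} := by
  simp only [Feasible, Set.ofPred_and, Set.ofPred_forall]
  exact (isClosed_iInter fun e => isClosed_le continuous_const (continuous_apply e)).inter
    ((isClosed_iInter fun e => isClosed_le (continuous_apply e) continuous_const).inter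
    (isClosed_iInter fun v => isClosed_eq (by fun_prop) (by fun_prop)))

theorem isCompact_flowsLE (N : FlowNetwork V E) (g : E → ℝ) : IsCompact (N.flowsLE g) := by
  refine (isCompact_Icc (a := 0) (b := N.cap)).of_isClosed_subset ?_
    fun f (hf : f ∈ N.flowsLE g) => ⟨hf.1.1, hf.1.2.1⟩
  simp only [flowsLE, Set.ofPred_and, Set.ofPred_forall]
  exact N.isClosed_setOf_feasible.inter
    (isClosed_iInter fun e =>
      isClosed_iInter fun _ => isClosed_le (continuous_apply e) continuous_const)

theorem exists_isMaxOn_flowsLE (N : FlowNetwork V E) {g : E → ℝ}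
    (hg : ∀ e ∈ N.Ein ∪ N.Eout, 0 ≤ g e) :
    ∃ f ∈ N.flowsLE g, IsMaxOn (fun f => ∑ e ∈ N.Ein ∪ N.Eout, f e) (N.flowsLE g) f :=
  (N.isCompact_flowsLE g).exists_isMaxOn ⟨0, N.feasible_zero, hg⟩ (by fun_prop)

section Maximizer

variable {N : FlowNetwork V E} {g f : E → ℝ}

theorem eq_of_isMaxOn_of_reflTransGen (hcap : ∀ e ∈ N.Ein ∪ N.Eout, g e ≤ N.cap e)
    (hf : f ∈ N.flowsLE g)
    (hmax : IsMaxOn (fun f => ∑ e ∈ N.Ein ∪ N.Eout, f e) (N.flowsLE g) f)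
    {ein eout : E} (hein : ein ∈ N.Ein) (hlt : f ein < g ein) (heout : eout ∈ N.Eout)
    (hr : Relation.ReflTransGen (N.ResidualAdj f) (N.head ein) (N.tail eout)) :
    f eout = g eout := by
  obtain ⟨hfeas, hfg⟩ := hf
  have heinIO : ein ∈ N.Ein ∪ N.Eout := mem_union_left _ hein
  have heoutIO : eout ∈ N.Ein ∪ N.Eout := mem_union_right _ heout
  by_contra hne
  have hlt' : f eout < g eout := lt_of_le_of_ne (hfg eout heoutIO) hne
  obtain ⟨q, hq, hqex, hqIO⟩ := N.exists_augmentingCirculation hein heout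
    (hlt.trans_le (hcap ein heinIO)) (hlt'.trans_le (hcap eout heoutIO)) hr
  have hle : ∀ᶠ t in 𝓝[>] (0 : ℝ), ∀ e ∈ N.Ein ∪ N.Eout, f e + t * q e ≤ g e := by
    refine (eventually_all_finset _).2 fun e he =>
      eventually_add_mul_le (hfg e he) fun hqe => ?_
    rw [hqIO e he] at hqe
    rcases eq_or_ne e ein with rfl | h1
    · exact hlt
    rcases eq_or_ne e eout with rfl | h2
    · exact hlt'
    · simp [h1, h2] at hqe
  obtain ⟨t, ⟨hft, hgt⟩, ht : 0 < t⟩ :=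
    ((hq.eventually_feasible_add_smul hfeas hqex).and hle).and self_mem_nhdsWithin |>.exists
  refine (isMaxOn_iff.1 hmax _ ⟨hft, by simpa using hgt⟩).not_gt (sum_lt_sum (fun e he => ?_)
    ⟨ein, heinIO, ?_⟩)
  · have : 0 ≤ q e := by rw [hqIO e he]; positivity
    simpa using mul_nonneg ht.le this
  · have : 0 < q ein := by rw [hqIO ein heinIO, if_pos rfl]; positivity
    simpa using mul_pos ht this

theorem eq_on_Ein_of_isMaxOn (hcap : ∀ e ∈ N.Ein ∪ N.Eout, g e ≤ N.cap e)
    (hup : ∀ A ⊆ N.Ein, ∀ B ⊆ N.Eout,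
      ∑ e ∈ A, g e - ∑ e ∈ B, g e ≤ N.maxFromTo A (N.Eout \ B))
    (hf : f ∈ N.flowsLE g)
    (hmax : IsMaxOn (fun f => ∑ e ∈ N.Ein ∪ N.Eout, f e) (N.flowsLE g) f) :
    ∀ e ∈ N.Ein, f e = g e := by
  classical
  intro e0 he0
  by_contra hne
  have hfg := hf.2
  have hlt : f e0 < g e0 := lt_of_le_of_ne (hfg e0 (mem_union_left _ he0)) hne
  obtain ⟨h0, hc, hex⟩ := (N.feasible_iff f).1 hf.1
  set T := univ.filter fun v => Relation.ReflTransGen (N.ResidualAdj f) (N.head e0) v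
  have hT : ∀ u ∈ T, ∀ v, N.ResidualAdj f u v → v ∈ T := fun u hu v huv => by
    simp only [T, mem_filter, mem_univ, true_and] at hu ⊢
    exact hu.tail huv
  have hB : ∑ e ∈ N.outEdgesFrom T, f e = ∑ e ∈ N.outEdgesFrom T, g e :=
    sum_congr rfl fun e he => by
      obtain ⟨he, hr⟩ := mem_filter.1 he
      exact eq_of_isMaxOn_of_reflTransGen hcap hf hmax he0 hlt he (by simpa [T] using hr)
  have hA : ∑ e ∈ N.inEdgesInto T, f e < ∑ e ∈ N.inEdgesInto T, g e :=
    sum_lt_sum (fun e he => hfg e (mem_union_left _ (mem_filter.1 he).1))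
      ⟨e0, mem_filter.2 ⟨he0, by simp [T, Relation.ReflTransGen.refl]⟩, hlt⟩
  have hbal := N.cut_balance hex T
  rw [N.sum_entering_eq_zero h0 hT, N.sum_leaving_eq_sum_cap hc hT] at hbal
  have := (hup (N.inEdgesInto T) (filter_subset _ _) (N.outEdgesFrom T) (filter_subset _ _)).trans
    (N.maxFromTo_le_sum_cap_leaving T)
  linarith

theorem eq_on_Eout_of_eq_on_Ein (hf : f ∈ N.flowsLE g) (hin : ∀ e ∈ N.Ein, f e = g e)
    (hsum : ∑ e ∈ N.Eout, g e ≤ ∑ e ∈ N.Ein, g e) : ∀ e ∈ N.Eout, f e = g e := by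
  have hfg : ∀ e ∈ N.Eout, f e ≤ g e := fun e he => hf.2 e (mem_union_right _ he)
  refine (sum_eq_sum_iff_of_le hfg).1 (le_antisymm (sum_le_sum hfg) ?_)
  calc ∑ e ∈ N.Eout, g e ≤ ∑ e ∈ N.Ein, g e := hsum
    _ = ∑ e ∈ N.Ein, f e := sum_congr rfl fun e he => (hin e he).symm
    _ = ∑ e ∈ N.Eout, f e := N.sum_Ein_eq_sum_Eout_s8 ((N.feasible_iff f).1 hf.1).2.2

end Maximizer

/-- an IO assignment `g` (nonnegative on `Ein ∪ Eout`, modelled as a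
total function whose other values are irrelevant) satisfying
`-maxFromTo N (Ein \ A) B ≤ g(A) - g(B) ≤ maxFromTo N A (Eout \ B)` for all
`A ⊆ Ein`, `B ⊆ Eout` extends to a feasible flow. -/
theorem stmt8 (N : FlowNetwork V E) (g : E → ℝ)
    (hg : ∀ e ∈ N.Ein ∪ N.Eout, 0 ≤ g e)
    (h : ∀ A ⊆ N.Ein, ∀ B ⊆ N.Eout,
      -(N.maxFromTo (N.Ein \ A) B) ≤ ∑ e ∈ A, g e - ∑ e ∈ B, g e ∧
      ∑ e ∈ A, g e - ∑ e ∈ B, g e ≤ N.maxFromTo A (N.Eout \ B)) :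
    ∃ f : E → ℝ, N.Feasible f ∧ ∀ e ∈ N.Ein ∪ N.Eout, f e = g e := by
  have hcap : ∀ e ∈ N.Ein ∪ N.Eout, g e ≤ N.cap e := by
    intro e he
    rcases mem_union.1 he with he | he
    · simpa using (h {e} (singleton_subset_iff.2 he) ∅ (empty_subset _)).2.trans
        (N.maxFromTo_le_sum_cap_left _ _)
    · have hlow := (h ∅ (empty_subset _) {e} (singleton_subset_iff.2 he)).1
      have hright := N.maxFromTo_le_sum_cap_right subset_rfl (singleton_subset_iff.2 he)
      simp only [sdiff_empty, sum_empty, sum_singleton] at hlow hright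
      linarith
  have hsum : ∑ e ∈ N.Eout, g e ≤ ∑ e ∈ N.Ein, g e := by
    have := (h N.Ein subset_rfl N.Eout subset_rfl).1
    rw [Finset.sdiff_self, maxFromTo_empty_left] at this
    linarith
  obtain ⟨f, hf, hmax⟩ := N.exists_isMaxOn_flowsLE hg
  have hin := eq_on_Ein_of_isMaxOn hcap (fun A hA B hB => (h A hA B hB).2) hf hmax
  exact ⟨f, hf.1, fun e he =>
    (mem_union.1 he).elim (hin e) (eq_on_Eout_of_eq_on_Ein hf hin hsum e)⟩

end FlowNetwork
end
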